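/- arXiv:2103.11908 — 4 statements merged into one kernel-verified Lean document; each statement's English description precedes it below -/
import Mathlib

section
/- For a linear system (A,b) with A ∈ ℂ^{n×n} and b ∈ ℂⁿ, the pair (A,b) is controllable (the controllability matrix [b, Ab, …, A^{n−1}b] has rank n) if and only if there is no nonzero vector q ∈ ℂⁿ and scalar λ ∈ ℂ with qᵀA = λqᵀ and qᵀb = 0 (PBH test). -/
/-!
If `qᵀA = λqᵀ` then `qᵀAᵏb = λᵏ qᵀb`, so a vector violating the PBH condition lies in the left
kernel of the controllability matrix. Conversely, a vector in that left kernel annihilates `Aᵏb`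
for `k < n`, hence for every `k` by Cayley–Hamilton. The space of all such vectors is invariant
under `q ↦ qᵀA`; if it is nonzero it contains a left eigenvector of `A` (`ℂ` is algebraically
closed), and that eigenvector is orthogonal to `b`.
-/

open Matrix Polynomial

namespace Matrix

variable {ι : Type*} [Fintype ι]

theorem rank_eq_card_iff_vecMul_eq_zero {m K : Type*} [Fintype m] [Field K] (M : Matrix ι m K) :
    M.rank = Fintype.card ι ↔ ∀ q : ι → K, q ᵥ* M = 0 → q = 0 := by
  rw [rank_eq_finrank_span_row, eq_comm, ← Set.finrank,
    ← linearIndependent_iff_card_eq_finrank_span, Fintype.linearIndependent_iff]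
  simp only [row, ← vecMul_eq_sum, funext_iff, Pi.zero_apply]

theorem dotProduct_pow_mulVec_of_vecMul_eq_smul [DecidableEq ι] {R : Type*} [CommSemiring R]
    {A : Matrix ι ι R} {q : ι → R} {μ : R} (hq : q ᵥ* A = μ • q) (b : ι → R) (k : ℕ) :
    q ⬝ᵥ (A ^ k *ᵥ b) = μ ^ k * (q ⬝ᵥ b) := by
  induction k with
  | zero => simp
  | succ k ih =>
    rw [pow_succ', ← mulVec_mulVec, dotProduct_mulVec, hq, smul_dotProduct, ih, smul_eq_mul,
      pow_succ', mul_assoc]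

variable [DecidableEq ι] {R : Type*} [CommRing R]

theorem pow_mulVec_mem_span_pow_mulVec [Nontrivial R] (A : Matrix ι ι R) (b : ι → R) (k : ℕ) :
    A ^ k *ᵥ b ∈ Submodule.span R ((fun i => A ^ i *ᵥ b) '' Set.Iio (Fintype.card ι)) := by
  cases isEmpty_or_nonempty ι
  · simp [Subsingleton.elim (A ^ k *ᵥ b) 0]
  have hdeg : (X ^ k %ₘ A.charpoly).natDegree < Fintype.card ι := by
    rw [← A.charpoly_natDegree_eq_dim]
    refine natDegree_modByMonic_lt _ A.charpoly_monic fun h => Fintype.card_ne_zero (α := ι) ?_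
    rw [← A.charpoly_natDegree_eq_dim, h, natDegree_one]
  -- Cayley–Hamilton: `A ^ k` is a polynomial in `A` of degree less than `card ι`.
  rw [pow_eq_aeval_mod_charpoly, aeval_eq_sum_range' hdeg, sum_mulVec]
  refine Submodule.sum_mem _ fun i hi => ?_
  rw [smul_mulVec]
  exact Submodule.smul_mem _ _ (Submodule.subset_span ⟨i, Finset.mem_range.mp hi, rfl⟩)

def krylovAnnihilator (A : Matrix ι ι R) (b : ι → R) : Submodule R (ι → R) where
  carrier := {q | ∀ k : ℕ, q ⬝ᵥ (A ^ k *ᵥ b) = 0}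
  add_mem' hq hp k := by rw [add_dotProduct, hq k, hp k, add_zero]
  zero_mem' _ := zero_dotProduct _
  smul_mem' c _ hq k := by rw [smul_dotProduct, hq k, smul_zero]

theorem mem_krylovAnnihilator_iff_lt_card [Nontrivial R] {A : Matrix ι ι R} {b q : ι → R} :
    q ∈ krylovAnnihilator A b ↔ ∀ k < Fintype.card ι, q ⬝ᵥ (A ^ k *ᵥ b) = 0 := by
  refine ⟨fun hq k _ => hq k, fun hq k => ?_⟩
  have hspan : Submodule.span R ((fun i => A ^ i *ᵥ b) '' Set.Iio (Fintype.card ι)) ≤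
      LinearMap.ker (dotProductBilin R R q) := by
    rw [Submodule.span_le]
    rintro _ ⟨i, hi, rfl⟩
    exact hq i hi
  simpa using hspan (pow_mulVec_mem_span_pow_mulVec A b k)

theorem vecMul_mem_krylovAnnihilator {A : Matrix ι ι R} {b q : ι → R}
    (hq : q ∈ krylovAnnihilator A b) : q ᵥ* A ∈ krylovAnnihilator A b := fun k => by
  rw [← dotProduct_mulVec, mulVec_mulVec, ← pow_succ']
  exact hq (k + 1)

end Matrix

theorem Module.End.exists_hasEigenvector_mem_of_mapsTo {K V : Type*} [Field K] [IsAlgClosed K]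
    [AddCommGroup V] [Module K V] [FiniteDimensional K V] (f : Module.End K V)
    {p : Submodule K V} (hp : p ≠ ⊥) (hfp : ∀ x ∈ p, f x ∈ p) :
    ∃ μ, ∃ v ∈ p, f.HasEigenvector μ v := by
  have : Nontrivial p := Submodule.nontrivial_iff_ne_bot.mpr hp
  obtain ⟨μ, hμ⟩ := Module.End.exists_eigenvalue (f.restrict hfp)
  obtain ⟨v, hv⟩ := hμ.exists_hasEigenvector
  refine ⟨μ, v, v.2, Module.End.hasEigenvector_iff.mpr ⟨?_, by simpa using hv.2⟩⟩
  simpa [Subtype.ext_iff] using hv.apply_eq_smul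

/-- PBH test: the controllability matrix `[b, Ab, …, A^{n-1}b]` has rank `n` iff there is no
nonzero `q` and scalar `λ` with `qᵀA = λqᵀ` and `qᵀb = 0`. -/
theorem stmt5 (n : ℕ) (A : Matrix (Fin n) (Fin n) ℂ) (b : Fin n → ℂ) :
    (Matrix.of fun i (k : Fin n) => ((A ^ (k : ℕ)) *ᵥ b) i).rank = n ↔
      ∀ (q : Fin n → ℂ) (lam : ℂ), q ᵥ* A = lam • q → q ⬝ᵥ b = 0 → q = 0 := by
  set C := Matrix.of fun i (k : Fin n) => ((A ^ (k : ℕ)) *ᵥ b) i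
  have hker (q : Fin n → ℂ) : q ᵥ* C = 0 ↔ q ∈ krylovAnnihilator A b := by
    simp [C, mem_krylovAnnihilator_iff_lt_card, funext_iff, vecMul, dotProduct, Fin.forall_iff]
  have hrank : C.rank = n ↔ ∀ q, q ᵥ* C = 0 → q = 0 := by
    simpa only [Fintype.card_fin] using rank_eq_card_iff_vecMul_eq_zero C
  simp only [hrank, hker]
  constructor
  · intro h q lam hq hb
    refine h q fun k => ?_
    rw [dotProduct_pow_mulVec_of_vecMul_eq_smul hq, hb, mul_zero]
  · intro h q hq
    by_contra hq0
    have hne : krylovAnnihilator A b ≠ ⊥ := fun hbot => hq0 (by simpa [hbot] using hq)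
    obtain ⟨μ, v, hv, hμv⟩ := Module.End.exists_hasEigenvector_mem_of_mapsTo (vecMulLinear A) hne
      fun _ => vecMul_mem_krylovAnnihilator
    exact hμv.2 (h v μ hμv.apply_eq_smul (by simpa using hv 0))
end

section
/- Let P(λ) = M − λE with M generic and E a partial permutation 0/1 matrix, and suppose the bipartite graph B(P(λ)) is DM-irreducible. If B(P(λ)) contains a self-loop (a position (i,i)-type entry of the form t_l − λ), then det P(λ) has at least one nonzero root in λ for generic values of the indeterminates. -/
/-- `M` is a matching inside the edge set `Ed` of a bipartite graph on `Fin n × Fin n`. -/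
def IsMatchingIn (n : ℕ) (Ed M : Finset (Fin n × Fin n)) : Prop :=
  M ⊆ Ed ∧ ∀ e ∈ M, ∀ e' ∈ M, e ≠ e' → e.1 ≠ e'.1 ∧ e.2 ≠ e'.2

/-- The maximum matching number of the bipartite graph with edge set `Ed`. -/
noncomputable def mtNum (n : ℕ) (Ed : Finset (Fin n × Fin n)) : ℕ :=
  sSup {k : ℕ | ∃ M, IsMatchingIn n Ed M ∧ M.card = k}

/-- Edge set of the bipartite graph of `P(λ) = M - λE`. -/
def pencilEdges (n r : ℕ) (pos : Fin r → Fin n × Fin n) (EE : Finset (Fin n × Fin n)) :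
    Finset (Fin n × Fin n) :=
  EE ∪ Finset.univ.image pos

/-- Determinant of the generic matrix pencil `P(λ) = M - λE`. -/
noncomputable def pencilDet (n r : ℕ) (pos : Fin r → Fin n × Fin n)
    (EE : Finset (Fin n × Fin n)) : Polynomial (MvPolynomial (Fin r) ℂ) :=
  (Matrix.of fun i j =>
    Polynomial.C (∑ k ∈ Finset.univ.filter (fun k => pos k = (i, j)),
        (MvPolynomial.X k : MvPolynomial (Fin r) ℂ))
    - (if (i, j) ∈ EE then (Polynomial.X : Polynomial (MvPolynomial (Fin r) ℂ)) else 0)).det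

/-!
DM-irreducibility yields a perfect matching through every edge of the bipartite graph, in
particular through the self-loop `e`; read it as a permutation `ρ` with every `(ρ j, j)` an edge.
For a set `G` of columns such that `(ρ j, j)` carries an indeterminate for `j ∈ G` and a `λ`
for `j ∉ G`, specialise the indeterminates on `{(ρ j, j) | j ∈ G}` to `1` and all others to `0`.
Because `E` is a partial permutation, only the term of `ρ` in the Leibniz expansion then
contributes to the coefficient of `λ ^ (n - |G|)`, which becomes `±1`. So that coefficient of
`det P(λ)` is a nonzero polynomial in the indeterminates. The self-loop lets us take both `G` and
`G ∪ {e.2}`, giving two nonzero coefficients in distinct degrees, and a complex polynomial with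
two nonzero coefficients has a nonzero root.
-/

open Polynomial Finset

theorem Polynomial.exists_ne_zero_eval_eq_zero_of_coeff_ne_zero {K : Type*} [Field K]
    [IsAlgClosed K] {p : K[X]} {a b : ℕ} (hab : a ≠ b) (ha : p.coeff a ≠ 0)
    (hb : p.coeff b ≠ 0) : ∃ z ≠ 0, p.eval z = 0 := by
  by_contra! h
  have hroots : p.roots = Multiset.replicate p.natDegree 0 := by
    refine Multiset.eq_replicate.mpr ⟨IsAlgClosed.card_roots_eq_natDegree, fun z hz => ?_⟩
    by_contra hz0
    exact h z hz0 (mem_roots'.mp hz).2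
  have hp : p = C p.leadingCoeff * X ^ p.natDegree := by
    conv_lhs => rw [← C_leadingCoeff_mul_prod_multiset_X_sub_C (p := p)
      IsAlgClosed.card_roots_eq_natDegree, hroots]
    simp
  rw [hp, coeff_C_mul_X_pow] at ha hb
  exact hab ((ite_ne_right_iff.mp ha).1.trans (ite_ne_right_iff.mp hb).1.symm)

theorem exists_ne_zero_eval_map_eq_zero_of_coeff_ne_zero {σ K : Type*} [Field K] [IsAlgClosed K]
    {p : (MvPolynomial σ K)[X]} {a b : ℕ} (hab : a ≠ b) (ha : p.coeff a ≠ 0)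
    (hb : p.coeff b ≠ 0) :
    ∃ c : MvPolynomial σ K, c ≠ 0 ∧ ∀ t : σ → K, MvPolynomial.eval t c ≠ 0 →
      ∃ z : K, z ≠ 0 ∧ (p.map (MvPolynomial.eval t)).eval z = 0 := by
  refine ⟨p.coeff a * p.coeff b, mul_ne_zero ha hb, fun t ht => ?_⟩
  rw [map_mul] at ht
  exact exists_ne_zero_eval_eq_zero_of_coeff_ne_zero hab
    (by rw [coeff_map]; exact left_ne_zero_of_mul ht)
    (by rw [coeff_map]; exact right_ne_zero_of_mul ht)

namespace IsMatchingIn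

variable {n : ℕ} {Ed M : Finset (Fin n × Fin n)}

theorem eq_of_fst_eq (h : IsMatchingIn n Ed M) {e e' : Fin n × Fin n} (he : e ∈ M)
    (he' : e' ∈ M) (hfst : e.1 = e'.1) : e = e' := by
  by_contra hne
  exact (h.2 e he e' he' hne).1 hfst

theorem eq_of_snd_eq (h : IsMatchingIn n Ed M) {e e' : Fin n × Fin n} (he : e ∈ M)
    (he' : e' ∈ M) (hsnd : e.2 = e'.2) : e = e' := by
  by_contra hne
  exact (h.2 e he e' he' hne).2 hsnd

theorem mono {Ed' : Finset (Fin n × Fin n)} (h : IsMatchingIn n Ed M) (hEd : Ed ⊆ Ed') :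
    IsMatchingIn n Ed' M :=
  ⟨h.1.trans hEd, h.2⟩

theorem insert (h : IsMatchingIn n Ed M) {e : Fin n × Fin n} (he : e ∈ Ed)
    (hM : ∀ x ∈ M, x.1 ≠ e.1 ∧ x.2 ≠ e.2) : IsMatchingIn n Ed (insert e M) := by
  refine ⟨insert_subset he h.1, fun x hx y hy hxy => ?_⟩
  rcases mem_insert.mp hx with rfl | hxM <;> rcases mem_insert.mp hy with rfl | hyM
  · exact absurd rfl hxy
  · exact (hM y hyM).imp Ne.symm Ne.symm
  · exact hM x hxM
  · exact h.2 x hxM y hyM hxy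

theorem card_le (h : IsMatchingIn n Ed M) : #M ≤ n := by
  simpa [card_image_of_injOn fun e he e' he' => h.eq_of_fst_eq he he'] using
    card_le_univ (M.image Prod.fst)

theorem bddAbove_card (Ed : Finset (Fin n × Fin n)) :
    BddAbove {k : ℕ | ∃ M, IsMatchingIn n Ed M ∧ #M = k} :=
  ⟨n, fun _ ⟨_, hM, hk⟩ => hk ▸ hM.card_le⟩

theorem card_le_mtNum (h : IsMatchingIn n Ed M) : #M ≤ mtNum n Ed :=
  le_csSup (bddAbove_card Ed) ⟨M, h, rfl⟩

theorem exists_perm_of_card_eq (h : IsMatchingIn n Ed M) (hcard : #M = n) :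
    ∃ ρ : Equiv.Perm (Fin n), ∀ j, (ρ j, j) ∈ M := by
  have hsnd : M.image Prod.snd = univ := eq_univ_of_card _ <| by
    rw [card_image_of_injOn fun e he e' he' => h.eq_of_snd_eq he he', hcard, Fintype.card_fin]
  have hrow : ∀ j, ∃ i, (i, j) ∈ M := fun j => by
    obtain ⟨e, he, rfl⟩ := mem_image.mp (hsnd ▸ mem_univ j)
    exact ⟨e.1, he⟩
  choose f hf using hrow
  have hf_inj : Function.Injective f := fun j j' hjj' =>
    congrArg Prod.snd (h.eq_of_fst_eq (hf j) (hf j') hjj')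
  exact ⟨Equiv.ofBijective f hf_inj.bijective_of_finite, hf⟩

end IsMatchingIn

theorem exists_isMatchingIn_card_eq_mtNum {n : ℕ} (Ed : Finset (Fin n × Fin n)) :
    ∃ M, IsMatchingIn n Ed M ∧ #M = mtNum n Ed :=
  have : {k : ℕ | ∃ M, IsMatchingIn n Ed M ∧ #M = k}.Nonempty :=
    ⟨0, ∅, ⟨empty_subset _, by simp⟩, card_empty⟩
  Nat.sSup_mem this (IsMatchingIn.bddAbove_card Ed)

section DMIrreducible

variable {n : ℕ} {Ed : Finset (Fin n × Fin n)}

theorem mtNum_eq_of_forall_mtNum_filter_add_one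
    (hDM : ∀ v₁ v₂, mtNum n (Ed.filter fun e => e.1 ≠ v₁ ∧ e.2 ≠ v₂) + 1 = mtNum n Ed) :
    mtNum n Ed = n := by
  obtain ⟨M, hM, hMcard⟩ := exists_isMatchingIn_card_eq_mtNum Ed
  by_contra hne
  have hlt : #M < n := by
    have := hM.card_le
    omega
  obtain ⟨v₁, -, hv₁⟩ := exists_mem_notMem_of_card_lt_card (s := M.image Prod.fst) (t := univ)
    (by simpa using card_image_le.trans_lt hlt)
  obtain ⟨v₂, -, hv₂⟩ := exists_mem_notMem_of_card_lt_card (s := M.image Prod.snd) (t := univ)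
    (by simpa using card_image_le.trans_lt hlt)
  have hM' : IsMatchingIn n (Ed.filter fun e => e.1 ≠ v₁ ∧ e.2 ≠ v₂) M :=
    ⟨fun e he => mem_filter.mpr ⟨hM.1 he, fun h => hv₁ (h ▸ mem_image_of_mem Prod.fst he),
      fun h => hv₂ (h ▸ mem_image_of_mem Prod.snd he)⟩, hM.2⟩
  have := hM'.card_le_mtNum
  have := hDM v₁ v₂
  omega

theorem exists_perm_forall_mem_of_mem
    (hDM : ∀ v₁ v₂, mtNum n (Ed.filter fun e => e.1 ≠ v₁ ∧ e.2 ≠ v₂) + 1 = mtNum n Ed)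
    {e : Fin n × Fin n} (he : e ∈ Ed) :
    ∃ ρ : Equiv.Perm (Fin n), (∀ j, (ρ j, j) ∈ Ed) ∧ ρ e.2 = e.1 := by
  obtain ⟨M, hM, hMcard⟩ :=
    exists_isMatchingIn_card_eq_mtNum (Ed.filter fun x => x.1 ≠ e.1 ∧ x.2 ≠ e.2)
  have hMe : ∀ x ∈ M, x.1 ≠ e.1 ∧ x.2 ≠ e.2 := fun x hx => (mem_filter.mp (hM.1 hx)).2
  have hM' := (hM.mono (filter_subset _ Ed)).insert he hMe
  have hcard : #(insert e M) = n := by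
    have := hDM e.1 e.2
    rw [mtNum_eq_of_forall_mtNum_filter_add_one hDM] at this
    rw [card_insert_of_notMem fun h => (hMe e h).1 rfl, hMcard]
    omega
  obtain ⟨ρ, hρ⟩ := hM'.exists_perm_of_card_eq hcard
  exact ⟨ρ, fun j => hM'.1 (hρ j),
    congrArg Prod.fst (hM'.eq_of_snd_eq (hρ e.2) (mem_insert_self e M) rfl)⟩

end DMIrreducible

section PartialPermPencil

variable {R ι : Type*} [CommRing R] [Fintype ι] [DecidableEq ι] {ρ : Equiv.Perm ι}
  {G : Finset ι} {EE : Finset (ι × ι)}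

-- `A - λE` for `A` the 0/1 matrix of `ρ` restricted to the columns in `G`: the pencil once the
-- indeterminates at `(ρ j, j)`, `j ∈ G`, are set to `1` and all others to `0`.
noncomputable def partialPermPencil (ρ : Equiv.Perm ι) (G : Finset ι) (EE : Finset (ι × ι)) :
    Matrix ι ι R[X] :=
  Matrix.of fun i j => C (if j ∈ G ∧ i = ρ j then 1 else 0) - if (i, j) ∈ EE then X else 0

theorem coeff_prod_partialPermPencil_eq_zero {τ : Equiv.Perm ι}
    (hE : ∀ i i' j, (i, j) ∈ EE → (i', j) ∈ EE → i = i')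
    (hGE : ∀ j ∉ G, (ρ j, j) ∈ EE) (hτ : τ ≠ ρ) :
    (∏ j, partialPermPencil (R := R) ρ G EE (τ j) j).coeff #Gᶜ = 0 := by
  by_cases hG : ∀ j ∈ G, τ j = ρ j
  · obtain ⟨j, hj⟩ : ∃ j, τ j ≠ ρ j := by
      by_contra! h
      exact hτ (Equiv.ext h)
    have hjG : j ∉ G := fun hjG => hj (hG j hjG)
    have hjE : (τ j, j) ∉ EE := fun hjE => hj (hE _ _ j hjE (hGE j hjG))
    rw [prod_eq_zero (mem_univ j) (by simp [partialPermPencil, hjG, hjE]), coeff_zero]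
  · push Not at hG
    obtain ⟨j, hjG, hj⟩ := hG
    have hdvd : X ^ (#Gᶜ + 1) ∣ ∏ j, partialPermPencil (R := R) ρ G EE (τ j) j := by
      have hcard : #(insert j Gᶜ) = #Gᶜ + 1 := card_insert_of_notMem (by simpa using hjG)
      rw [← hcard, ← prod_const]
      refine (prod_dvd_prod_of_dvd _ _ fun j' hj' => ?_).trans
        (prod_dvd_prod_of_subset _ _ _ (subset_univ _))
      have hzero : ¬(j' ∈ G ∧ τ j' = ρ j') := by
        rintro ⟨hj'G, hτj'⟩
        rcases mem_insert.mp hj' with rfl | hj'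
        exacts [hj hτj', (mem_compl.mp hj') hj'G]
      simp only [partialPermPencil, Matrix.of_apply, if_neg hzero, map_zero, zero_sub]
      split_ifs <;> simp
    exact X_pow_dvd_iff.mp hdvd _ (Nat.lt_succ_self _)

theorem coeff_prod_partialPermPencil_self (hGE : ∀ j ∉ G, (ρ j, j) ∈ EE) :
    (∏ j, partialPermPencil (R := R) ρ G EE (ρ j) j).coeff #Gᶜ = (-1) ^ #Gᶜ := by
  rw [← prod_mul_prod_compl G]
  have hGc : ∏ j ∈ Gᶜ, partialPermPencil (R := R) ρ G EE (ρ j) j = (-1) ^ #Gᶜ * X ^ #Gᶜ := by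
    rw [← mul_pow, ← prod_const]
    refine prod_congr rfl fun j hj => ?_
    have hjG : j ∉ G := mem_compl.mp hj
    simp [partialPermPencil, hjG, hGE j hjG]
  have hG : (∏ j ∈ G, partialPermPencil (R := R) ρ G EE (ρ j) j).eval 0 = 1 := by
    rw [eval_prod]
    exact prod_eq_one fun j hj => by
      simp only [partialPermPencil, Matrix.of_apply, hj, true_and, if_true]
      split_ifs <;> simp
  rw [hGc, mul_left_comm, ← mul_assoc, coeff_mul_X_pow', if_pos le_rfl, Nat.sub_self,
    coeff_zero_eq_eval_zero, eval_mul, hG, mul_one]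
  simp

theorem coeff_det_partialPermPencil (hE : ∀ i i' j, (i, j) ∈ EE → (i', j) ∈ EE → i = i')
    (hGE : ∀ j ∉ G, (ρ j, j) ∈ EE) :
    (partialPermPencil (R := R) ρ G EE).det.coeff #Gᶜ = Equiv.Perm.sign ρ • (-1) ^ #Gᶜ := by
  rw [Matrix.det_apply, finsetSum_coeff, sum_eq_single ρ, coeff_smul,
    coeff_prod_partialPermPencil_self hGE]
  · intro τ _ hτ
    rw [coeff_smul, coeff_prod_partialPermPencil_eq_zero hE hGE hτ, smul_zero]
  · exact fun h => (h (mem_univ ρ)).elim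

end PartialPermPencil

section Pencil

variable {n r : ℕ} {pos : Fin r → Fin n × Fin n} {EE : Finset (Fin n × Fin n)}
  {ρ : Equiv.Perm (Fin n)} {G : Finset (Fin n)}

theorem pencilDet_map_eval_eq_det_partialPermPencil (hpos : Function.Injective pos)
    (hG : ∀ j ∈ G, ∃ k, pos k = (ρ j, j)) :
    (pencilDet n r pos EE).map
        (MvPolynomial.eval fun k => if (pos k).2 ∈ G ∧ (pos k).1 = ρ (pos k).2 then 1 else 0) =
      (partialPermPencil ρ G EE).det := by
  have hentry : ∀ i j, MvPolynomial.eval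
      (fun k => if (pos k).2 ∈ G ∧ (pos k).1 = ρ (pos k).2 then (1 : ℂ) else 0)
      (∑ k with pos k = (i, j), MvPolynomial.X k) = if j ∈ G ∧ i = ρ j then 1 else 0 := by
    intro i j
    simp only [map_sum, MvPolynomial.eval_X]
    by_cases hij : j ∈ G ∧ i = ρ j
    · obtain ⟨k, hk⟩ := hG j hij.1
      have hfilter : univ.filter (fun k' => pos k' = (i, j)) = {k} := by
        ext k'
        rw [mem_filter, mem_singleton, hij.2, ← hk]
        exact ⟨fun h => hpos h.2, fun h => ⟨mem_univ k', h ▸ rfl⟩⟩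
      rw [if_pos hij, hfilter, sum_singleton, hk, if_pos ⟨hij.1, rfl⟩]
    · rw [if_neg hij]
      refine sum_eq_zero fun k hk => if_neg ?_
      rwa [(mem_filter.mp hk).2]
  rw [pencilDet, ← coe_mapRingHom, RingHom.map_det]
  congr 1
  refine Matrix.ext fun i j => ?_
  simp only [RingHom.mapMatrix_apply, Matrix.map_apply, Matrix.of_apply, coe_mapRingHom,
    Polynomial.map_sub, map_C, hentry, partialPermPencil]
  split_ifs <;> simp

theorem coeff_pencilDet_ne_zero (hpos : Function.Injective pos)
    (hE : ∀ i i' j, (i, j) ∈ EE → (i', j) ∈ EE → i = i')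
    (hG : ∀ j ∈ G, ∃ k, pos k = (ρ j, j)) (hGE : ∀ j ∉ G, (ρ j, j) ∈ EE) :
    (pencilDet n r pos EE).coeff #Gᶜ ≠ 0 := by
  intro h
  have := congrArg (coeff · #Gᶜ) (pencilDet_map_eval_eq_det_partialPermPencil (EE := EE) hpos hG)
  simp only [coeff_map, h, map_zero, coeff_det_partialPermPencil hE hGE] at this
  simp [Units.smul_def] at this

end Pencil

/-- If the bipartite graph of the pencil `P(λ) = M - λE` is DM-irreducible (deleting any row
vertex and any column vertex decreases the maximum matching number by exactly one) and it
contains a self-loop (an entry `t_l - λ`), then `det P(λ)` has at least one nonzero root in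
`λ` for generic values of the indeterminates. -/
theorem stmt11 (n r : ℕ) (pos : Fin r → Fin n × Fin n) (hpos : Function.Injective pos)
    (EE : Finset (Fin n × Fin n))
    (hE : ∀ e ∈ EE, ∀ e' ∈ EE, e ≠ e' → e.1 ≠ e'.1 ∧ e.2 ≠ e'.2)
    (hDM : ∀ v₁ v₂ : Fin n,
      mtNum n ((pencilEdges n r pos EE).filter (fun e => e.1 ≠ v₁ ∧ e.2 ≠ v₂)) + 1
        = mtNum n (pencilEdges n r pos EE))
    (hself : ∃ k, pos k ∈ EE) :
    ∃ c : MvPolynomial (Fin r) ℂ, c ≠ 0 ∧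
      ∀ t : Fin r → ℂ, MvPolynomial.eval t c ≠ 0 →
        ∃ z : ℂ, z ≠ 0 ∧
          Polynomial.eval z ((pencilDet n r pos EE).map (MvPolynomial.eval t)) = 0 := by
  obtain ⟨k₀, hk₀⟩ := hself
  have hcol : ∀ i i' j, (i, j) ∈ EE → (i', j) ∈ EE → i = i' := fun i i' j hi hi' =>
    by_contra fun hne => (hE _ hi _ hi' fun h => hne (congrArg Prod.fst h)).2 rfl
  obtain ⟨ρ, hρ, hρk₀⟩ := exists_perm_forall_mem_of_mem hDM (mem_union_left _ hk₀)
  set G := univ.filter fun j => (ρ j, j) ∉ EE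
  have hGpos : ∀ j ∈ G, ∃ k, pos k = (ρ j, j) := fun j hj => by
    simpa [pencilEdges, (mem_filter.mp hj).2] using hρ j
  have hGE : ∀ j ∉ G, (ρ j, j) ∈ EE := fun j hj => by simpa [G] using hj
  have hk₀G : (pos k₀).2 ∉ G := fun h => (mem_filter.mp h).2 (by rwa [hρk₀])
  have hGpos' : ∀ j ∈ insert (pos k₀).2 G, ∃ k, pos k = (ρ j, j) := fun j hj => by
    rcases mem_insert.mp hj with rfl | hj
    exacts [⟨k₀, by rw [hρk₀]⟩, hGpos j hj]
  have hGE' : ∀ j ∉ insert (pos k₀).2 G, (ρ j, j) ∈ EE := fun j hj =>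
    hGE j fun h => hj (mem_insert_of_mem h)
  exact exists_ne_zero_eval_map_eq_zero_of_coeff_ne_zero
    (card_lt_card (compl_ssubset_compl.mpr (ssubset_insert hk₀G))).ne
    (coeff_pencilDet_ne_zero hpos hcol hGpos' hGE') (coeff_pencilDet_ne_zero hpos hcol hGpos hGE)
end

section
/- Suppose the structured system (Ā, b̄) is structurally controllable, i.e., in its system graph every state vertex is reachable from the input vertex and grank([Ā, b̄]) = n. Then for every j ∈ {1,…,n+1}, the bipartite graph of the generic matrix pencil [Ā − λI, b̄] with column j deleted has a maximum matching of size n. -/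
/-- Sparsity pattern of the row-`i`, column-`c` entry of `[Ā, b̄]`, columns indexed by
`Fin n ⊕ Unit` (state columns and the input column). -/
def pattAB (n : ℕ) (SA : Fin n → Fin n → Prop) (Sb : Fin n → Prop) :
    Fin n → (Fin n ⊕ Unit) → Prop :=
  fun i c => Sum.elim (fun k => SA i k) (fun _ => Sb i) c

/-- Adjacency of the system graph `G(Ā, b̄)`: vertices are the states (`Sum.inl`) and the
input (`Sum.inr`); `(x_i, x_j)` is an edge iff `Ā_{ji} ≠ 0`, `(u, x_i)` iff `b̄_i ≠ 0`. -/
def sysAdj (n : ℕ) (SA : Fin n → Fin n → Prop) (Sb : Fin n → Prop) :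
    (Fin n ⊕ Unit) → (Fin n ⊕ Unit) → Prop :=
  fun u v =>
    match u, v with
    | Sum.inl i, Sum.inl j => SA j i
    | Sum.inr _, Sum.inl i => Sb i
    | _, Sum.inr _ => False

/-- Alternating-chain step: given a matching avoiding column `inl k` and an edge `SA i₀ k`
with `k ≠ i₀`, produce a matching avoiding column `inl i₀`. -/
theorem stepLemma (n : ℕ) (SA : Fin n → Fin n → Prop) (Sb : Fin n → Prop)
    (k i₀ : Fin n) (hk : k ≠ i₀) (hSA : SA i₀ k)
    (g' : Fin n → Fin n ⊕ Unit) (hinj : Function.Injective g')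
    (havoid : ∀ i, g' i ≠ Sum.inl k)
    (hedge : ∀ i, g' i = Sum.inl i ∨ pattAB n SA Sb i (g' i)) :
    ∃ g : Fin n → Fin n ⊕ Unit, Function.Injective g ∧
      ∀ i, g i ≠ Sum.inl i₀ ∧ (g i = Sum.inl i ∨ pattAB n SA Sb i (g i)) := by
  classical
  set rel : Fin n → Fin n → Prop := fun a b => g' b = Sum.inl a with hrel
  set T : Fin n → Prop := fun r => Relation.TransGen rel i₀ r with hT
  have hsucc_uniq : ∀ a b b' : Fin n, rel a b → rel a b' → b = b' := by
    intro a b b' h h'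
    exact hinj (h.trans h'.symm)
  have hclos : ∀ i r : Fin n, g' i = Sum.inl r → (T r ∨ r = i₀) → T i := by
    intro i r h hr
    rcases hr with hr | hr
    · exact Relation.TransGen.tail hr h
    · subst hr; exact Relation.TransGen.single h
  have hback : T i₀ → ∀ r, T r → Relation.TransGen rel r i₀ := by
    intro hcyc r hr
    induction hr with
    | single h =>
      rcases Relation.TransGen.head'_iff.mp hcyc with ⟨c, hc, hci⟩
      rw [hsucc_uniq i₀ _ _ h hc]
      exact Relation.TransGen.trans_right hci hcyc
    | @tail b r' hb h ih =>
      rcases Relation.TransGen.head'_iff.mp ih with ⟨c, hc, hci⟩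
      rw [hsucc_uniq b _ _ h hc]
      exact Relation.TransGen.trans_right hci hcyc
  by_cases hkT : T k
  · -- if `k` is in the chain from `i₀`, then `i₀` is not on a cycle
    have hni : ¬ T i₀ := by
      intro hcyc
      rcases Relation.TransGen.head'_iff.mp (hback hcyc k hkT) with ⟨c, hc, _⟩
      exact havoid c hc
    refine ⟨fun i => if T i then Sum.inl i else g' i, ?_, ?_⟩
    · intro a b hab
      simp only at hab
      by_cases ha : T a <;> by_cases hb : T b
      · rw [if_pos ha, if_pos hb] at hab; exact Sum.inl_injective hab
      · rw [if_pos ha, if_neg hb] at hab; exact absurd (hclos b a hab.symm (Or.inl ha)) hb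
      · rw [if_neg ha, if_pos hb] at hab; exact absurd (hclos a b hab (Or.inl hb)) ha
      · rw [if_neg ha, if_neg hb] at hab; exact hinj hab
    · intro i
      by_cases hi : T i
      · refine ⟨?_, Or.inl ?_⟩
        · show (if T i then Sum.inl i else g' i) ≠ Sum.inl i₀
          rw [if_pos hi]
          exact fun h => hni (Sum.inl_injective h ▸ hi)
        · show (if T i then Sum.inl i else g' i) = Sum.inl i
          rw [if_pos hi]
      · refine ⟨?_, ?_⟩
        · show (if T i then Sum.inl i else g' i) ≠ Sum.inl i₀
          rw [if_neg hi]
          exact fun h => hi (hclos i i₀ h (Or.inr rfl))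
        · show (if T i then Sum.inl i else g' i) = Sum.inl i ∨
            pattAB n SA Sb i (if T i then Sum.inl i else g' i)
          rw [if_neg hi]
          exact hedge i
  · refine ⟨fun i => if i = i₀ then Sum.inl k else if T i then Sum.inl i else g' i, ?_, ?_⟩
    · intro a b hab
      simp only at hab
      by_cases ha : a = i₀ <;> by_cases hb : b = i₀
      · exact ha.trans hb.symm
      · rw [if_pos ha, if_neg hb] at hab
        by_cases hTb : T b
        · rw [if_pos hTb] at hab
          exact absurd (Sum.inl_injective hab ▸ hTb) hkT
        · rw [if_neg hTb] at hab
          exact absurd hab.symm (havoid b)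
      · rw [if_neg ha, if_pos hb] at hab
        by_cases hTa : T a
        · rw [if_pos hTa] at hab
          exact absurd (Sum.inl_injective hab.symm ▸ hTa) hkT
        · rw [if_neg hTa] at hab
          exact absurd hab (havoid a)
      · rw [if_neg ha, if_neg hb] at hab
        by_cases hTa : T a <;> by_cases hTb : T b
        · rw [if_pos hTa, if_pos hTb] at hab; exact Sum.inl_injective hab
        · rw [if_pos hTa, if_neg hTb] at hab
          exact absurd (hclos b a hab.symm (Or.inl hTa)) hTb
        · rw [if_neg hTa, if_pos hTb] at hab
          exact absurd (hclos a b hab (Or.inl hTb)) hTa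
        · rw [if_neg hTa, if_neg hTb] at hab; exact hinj hab
    · intro i
      by_cases hi : i = i₀
      · refine ⟨?_, Or.inr ?_⟩
        · show (if i = i₀ then Sum.inl k else if T i then Sum.inl i else g' i) ≠ Sum.inl i₀
          rw [if_pos hi]
          exact fun h => hk (Sum.inl_injective h)
        · show pattAB n SA Sb i (if i = i₀ then Sum.inl k else if T i then Sum.inl i else g' i)
          rw [if_pos hi, hi]
          exact hSA
      · by_cases hTi : T i
        · refine ⟨?_, Or.inl ?_⟩
          · show (if i = i₀ then Sum.inl k else if T i then Sum.inl i else g' i) ≠ Sum.inl i₀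
            rw [if_neg hi, if_pos hTi]
            exact fun h => hi (Sum.inl_injective h)
          · show (if i = i₀ then Sum.inl k else if T i then Sum.inl i else g' i) = Sum.inl i
            rw [if_neg hi, if_pos hTi]
        · refine ⟨?_, ?_⟩
          · show (if i = i₀ then Sum.inl k else if T i then Sum.inl i else g' i) ≠ Sum.inl i₀
            rw [if_neg hi, if_neg hTi]
            exact fun h => hTi (hclos i i₀ h (Or.inr rfl))
          · show (if i = i₀ then Sum.inl k else if T i then Sum.inl i else g' i) = Sum.inl i ∨
              pattAB n SA Sb i
                (if i = i₀ then Sum.inl k else if T i then Sum.inl i else g' i)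
            rw [if_neg hi, if_neg hTi]
            exact hedge i

/-- Lemma 3 (paper): if `(Ā, b̄)` is structurally controllable (every state is input-reachable
and `grank [Ā, b̄] = n`), then for every column `j` of `[Ā - λI, b̄]`, the bipartite graph of
the pencil with column `j` deleted has a maximum matching of size `n`. Edges of this bipartite
graph are the `λ`-edges `(x_i, v_i)` and the nonzero positions of `[Ā, b̄]`. -/
theorem stmt15 (n : ℕ) (SA : Fin n → Fin n → Prop) (Sb : Fin n → Prop)
    (hreach : ∀ i : Fin n,
      Relation.ReflTransGen (sysAdj n SA Sb) (Sum.inr ()) (Sum.inl i))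
    (hgrank : ∃ M : Matrix (Fin n) (Fin n ⊕ Unit) ℂ,
      (∀ i c, ¬ pattAB n SA Sb i c → M i c = 0) ∧ M.rank = n) :
    ∀ j : Fin n ⊕ Unit, ∃ g : Fin n → Fin n ⊕ Unit,
      Function.Injective g ∧
      ∀ i, g i ≠ j ∧ (g i = Sum.inl i ∨ pattAB n SA Sb i (g i)) := by
  classical
  have key : ∀ v, Relation.ReflTransGen (sysAdj n SA Sb) (Sum.inr ()) v →
      ∀ i₀ : Fin n, v = Sum.inl i₀ →
      ∃ g : Fin n → Fin n ⊕ Unit, Function.Injective g ∧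
        ∀ i, g i ≠ Sum.inl i₀ ∧ (g i = Sum.inl i ∨ pattAB n SA Sb i (g i)) := by
    intro v hv
    induction hv with
    | refl => intro i₀ h; exact absurd h (by simp)
    | @tail b c hb hadj ih =>
      intro i₀ hc
      subst hc
      cases b with
      | inr u =>
        have hSb : Sb i₀ := hadj
        refine ⟨fun i => if i = i₀ then Sum.inr () else Sum.inl i, ?_, ?_⟩
        · intro a b hab
          simp only at hab
          by_cases ha : a = i₀ <;> by_cases hb' : b = i₀
          · exact ha.trans hb'.symm
          · rw [if_pos ha, if_neg hb'] at hab; exact absurd hab (by simp)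
          · rw [if_neg ha, if_pos hb'] at hab; exact absurd hab (by simp)
          · rw [if_neg ha, if_neg hb'] at hab; exact Sum.inl_injective hab
        · intro i
          by_cases hi : i = i₀
          · refine ⟨?_, Or.inr ?_⟩
            · show (if i = i₀ then Sum.inr () else Sum.inl i) ≠ Sum.inl i₀
              rw [if_pos hi]; simp
            · show pattAB n SA Sb i (if i = i₀ then Sum.inr () else Sum.inl i)
              rw [if_pos hi]
              show Sb i
              rw [hi]
              exact hSb
          · refine ⟨?_, Or.inl ?_⟩
            · show (if i = i₀ then Sum.inr () else Sum.inl i) ≠ Sum.inl i₀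
              rw [if_neg hi]
              exact fun h => hi (Sum.inl_injective h)
            · show (if i = i₀ then Sum.inr () else Sum.inl i) = Sum.inl i
              rw [if_neg hi]
      | inl k =>
        have hSA : SA i₀ k := hadj
        rcases ih k rfl with ⟨g', h1, h2⟩
        by_cases hki : k = i₀
        · subst hki; exact ⟨g', h1, h2⟩
        · exact stepLemma n SA Sb k i₀ hki hSA g' h1 (fun i => (h2 i).1) (fun i => (h2 i).2)
  rintro (j | u)
  · exact key _ (hreach j) j rfl
  · exact ⟨Sum.inl, Sum.inl_injective, fun i => ⟨by simp, Or.inl rfl⟩⟩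
end

section
/- If every state vertex x_j is reachable from the input vertex x_{n+1} via a directed path in the system graph, then replacing, along this path x_{n+1} → x_{j₁} → ⋯ → x_{j_r} = x_j, the diagonal edges (x_{j_k}, v_{j_k}) by the path edges (x_{j_{k+1}}, v_{j_k}) and (x_{j₁}, v_{n+1}), and keeping diagonal edges (x_i, v_i) for i not on the path, yields a matching of size n in the bipartite graph that avoids column vertex v_j. -/
/-- From a directed path `x_{n+1} → x_{j₁} → ⋯ → x_{j_r} = x_j` in the system graph
(`p 0, …, p r` being the state vertices on the path, with `Sb (p 0)` and
`SA (p (k+1)) (p k)` along the path), one obtains a size-`n` matching of the bipartite graph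
of the pencil avoiding the column vertex `v_j`: replace the diagonal (`λ`-) edges on the path
by the path edges `(x_{j_{k+1}}, v_{j_k})` and `(x_{j₁}, v_{n+1})`, keeping the diagonal
edges `(x_i, v_i)` off the path. -/
theorem stmt16 (n r : ℕ) (SA : Fin n → Fin n → Prop) (Sb : Fin n → Prop)
    (j : Fin n) (p : Fin (r + 1) → Fin n) (hinj : Function.Injective p)
    (hstart : Sb (p 0)) (hlast : p (Fin.last r) = j)
    (hpath : ∀ k : Fin r, SA (p k.succ) (p k.castSucc)) :
    ∃ g : Fin n → Fin n ⊕ Unit,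
      Function.Injective g ∧
      (∀ i, g i ≠ Sum.inl j) ∧
      (∀ i, g i = Sum.inl i ∨ Sum.elim (fun k => SA i k) (fun _ => Sb i) (g i)) ∧
      g (p 0) = Sum.inr () ∧
      (∀ k : Fin r, g (p k.succ) = Sum.inl (p k.castSucc)) ∧
      (∀ i, (∀ k : Fin (r + 1), p k ≠ i) → g i = Sum.inl i) := by
  classical
  set g : Fin n → Fin n ⊕ Unit := fun i =>
    if h : ∃ k : Fin (r + 1), p k = i then
      if h0 : h.choose = 0 then Sum.inr ()
      else Sum.inl (p ((h.choose.pred h0).castSucc))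
    else Sum.inl i with hgdef
  have hg_off : ∀ i, (∀ k : Fin (r + 1), p k ≠ i) → g i = Sum.inl i := by
    intro i hi
    simp only [hgdef]
    rw [dif_neg]
    rintro ⟨k, hk⟩; exact hi k hk
  have hg_path : ∀ k : Fin (r + 1), g (p k) =
      if h0 : k = 0 then Sum.inr () else Sum.inl (p ((k.pred h0).castSucc)) := by
    intro k
    have h : ∃ m : Fin (r + 1), p m = p k := ⟨k, rfl⟩
    have hch : h.choose = k := hinj h.choose_spec
    simp only [hgdef]
    rw [dif_pos h]
    simp [hch]
  have hcs_ne_last : ∀ m : Fin r, m.castSucc ≠ Fin.last r := fun m =>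
    Fin.ne_of_lt (Fin.castSucc_lt_last m)
  refine ⟨g, ?_, ?_, ?_, ?_, ?_, hg_off⟩
  · -- injectivity
    intro a b hab
    by_cases ha : ∃ k : Fin (r + 1), p k = a
    · obtain ⟨k, rfl⟩ := ha
      by_cases hb : ∃ k' : Fin (r + 1), p k' = b
      · obtain ⟨k', rfl⟩ := hb
        rw [hg_path k, hg_path k'] at hab
        by_cases h0 : k = 0 <;> by_cases h0' : k' = 0 <;>
          simp [h0, h0'] at hab ⊢
        have := hinj hab
        have : k.pred h0 = k'.pred h0' := Fin.castSucc_injective _ this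
        have : k = k' := by
          rw [← Fin.succ_pred k h0, ← Fin.succ_pred k' h0', this]
        exact congrArg p this
      · push_neg at hb
        rw [hg_path k, hg_off b hb] at hab
        by_cases h0 : k = 0
        · simp [h0] at hab
        · simp [h0] at hab
          exact absurd hab (hb _)
    · push_neg at ha
      rw [hg_off a ha] at hab
      by_cases hb : ∃ k' : Fin (r + 1), p k' = b
      · obtain ⟨k', rfl⟩ := hb
        rw [hg_path k'] at hab
        by_cases h0' : k' = 0
        · simp [h0'] at hab
        · simp [h0'] at hab
          exact absurd hab.symm (ha _)
      · push_neg at hb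
        rw [hg_off b hb] at hab
        exact Sum.inl_injective hab
  · -- avoids j
    intro i hi
    by_cases h : ∃ k : Fin (r + 1), p k = i
    · obtain ⟨k, rfl⟩ := h
      rw [hg_path k] at hi
      by_cases h0 : k = 0
      · simp [h0] at hi
      · simp [h0] at hi
        rw [← hlast] at hi
        exact hcs_ne_last _ (hinj hi)
    · push_neg at h
      rw [hg_off i h] at hi
      have : i = j := Sum.inl_injective hi
      exact h (Fin.last r) (hlast.trans this.symm)
  · -- edges
    intro i
    by_cases h : ∃ k : Fin (r + 1), p k = i
    · obtain ⟨k, rfl⟩ := h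
      rw [hg_path k]
      by_cases h0 : k = 0
      · right; simp [h0]; exact h0 ▸ hstart
      · right
        simp only [dif_neg h0, Sum.elim_inl]
        have := hpath (k.pred h0)
        rwa [Fin.succ_pred] at this
    · push_neg at h
      left; exact hg_off i h
  · rw [hg_path 0]; simp
  · intro k
    rw [hg_path k.succ]
    simp [Fin.succ_ne_zero]
end
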